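/- Let (Λ_t) be a family of maps Λ_t : E × E → F_t (F_t a space of F_t-measurable bounded random variables) satisfying no-undercut Λ_s(X;Y) ≤ Λ_s(X;X) and time-consistency of type 1: Λ_s(-Λ_t(X;Y); Y) = Λ_s(X;Y) for all s ≤ t. Then ρ_t(X) := Λ_t(X;X) is weakly time-consistent: ρ_s(X) ≤ ρ_s(-ρ_t(X)) for all s ≤ t and all X. -/

import Mathlib

/-- Part of Proposition 3.1(a): no-undercut together with time-consistency of type 1 for the
dynamic allocation `Λ_t` implies weak time-consistency of `ρ_t(X) := Λ_t(X;X)`. -/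
theorem weak_time_consistency_of_type1
    {E : Type*} [AddCommGroup E] [PartialOrder E]
    (T : ℝ) (Λ : ℝ → E → E → E)
    (hnu : ∀ s : ℝ, 0 ≤ s → s ≤ T → ∀ X Y : E, Λ s X Y ≤ Λ s X X)
    (htc1 : ∀ s t : ℝ, 0 ≤ s → s ≤ t → t ≤ T → ∀ X Y : E,
      Λ s (-(Λ t X Y)) Y = Λ s X Y)
    (ρ : ℝ → E → E) (hρ : ∀ (t : ℝ) (X : E), ρ t X = Λ t X X) :
    ∀ s t : ℝ, 0 ≤ s → s ≤ t → t ≤ T → ∀ X : E, ρ s X ≤ ρ s (-(ρ t X)) := by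
  intro s t hs hst htT X
  simp only [hρ]
  calc Λ s X X = Λ s (-(Λ t X X)) X := (htc1 s t hs hst htT X X).symm
    _ ≤ Λ s (-(Λ t X X)) (-(Λ t X X)) := hnu s hs (hst.trans htT) _ _
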